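/- Let epsilon > 0 and let a = r/q > 1 be rational in lowest terms with r > log2(1/epsilon) + 1, and let 1/2 < p1 < 1 with k_i = floor((i+1)/a)+1. Then | S_r/(1 - 2 p1^q (1-p1)^r) - sum_{i=0}^{infty} (1-p1)^i p1^{k_i} | < epsilon, where S_r = sum_{i=0}^{r-1} (1-p1)^i p1^{k_i}. Consequently, at most (log2(1/epsilon)+1)^2 rationals a in lowest terms (with numerator and denominator bounded accordingly) violate this bound. -/

import Mathlib

/-- `k_i` for cascade constant `a`. -/
noncomputable def kFun (a : ℝ) (i : ℕ) : ℕ := (⌊((i : ℝ) + 1) / a⌋ + 1).toNat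

/-- Y-cascade probability formula for a rational cascade constant `a = r/q`. -/
noncomputable def Pra (p1 : ℝ) (r q : ℕ) : ℝ :=
  (∑ i ∈ Finset.range r, (1 - p1) ^ i * p1 ^ (kFun ((r : ℝ) / (q : ℝ)) i)) /
    (1 - 2 * p1 ^ q * (1 - p1) ^ r)

/-- Y-cascade probability formula for an irrational cascade constant `a`. -/
noncomputable def Pirra (p1 a : ℝ) : ℝ := ∑' i : ℕ, (1 - p1) ^ i * p1 ^ (kFun a i)

/-! For `a = r / q` one has `k_(i+r) = k_i + q`, so the series `∑ (1-p)^i p^(k_i)` is geometric in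
blocks of length `r` with ratio `x = p^q (1-p)^r` and equals `S_r / (1 - x)`. The two formulas
therefore differ by `S_r x / ((1 - 2x)(1 - x)) ≤ 2x`, and `p (1 - p) ≤ 1/4` gives
`x ≤ 2^-(r+1)`, which is below `ε / 2` once `r > log₂ (1/ε)`. An exceptional rational
`r / q > 1` thus has `q < r ≤ log₂ (1/ε) + 1`, and there are at most `(log₂ (1/ε) + 1)²` such
pairs `(r, q)`. -/

open Finset in
theorem tsum_eq_sum_range_div_of_add_eq_mul {f : ℕ → ℝ} (hf : Summable f) {n : ℕ} {c : ℝ}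
    (hc : c ≠ 1) (hper : ∀ i, f (i + n) = c * f i) :
    ∑' i, f i = (∑ i ∈ range n, f i) / (1 - c) := by
  have hsplit := hf.sum_add_tsum_nat_add n
  simp only [hper, tsum_mul_left] at hsplit
  rw [eq_div_iff (sub_ne_zero.2 hc.symm)]
  linarith

lemma one_le_kFun {a : ℝ} (ha : 0 ≤ a) (i : ℕ) : 1 ≤ kFun a i := by
  have : 0 ≤ ⌊((i : ℝ) + 1) / a⌋ := Int.floor_nonneg.2 (by positivity)
  unfold kFun
  omega

lemma kFun_add {r q : ℕ} (hr : 0 < r) (hq : 0 < q) (i : ℕ) :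
    kFun (r / q) (i + r) = kFun (r / q) i + q := by
  have hshift : ((i + r : ℕ) + 1 : ℝ) / (r / q) = ((i : ℝ) + 1) / (r / q) + q := by
    field_simp
    push_cast
    ring
  have : 0 ≤ ⌊((i : ℝ) + 1) / (r / q)⌋ := Int.floor_nonneg.2 (by positivity)
  unfold kFun
  rw [hshift, Int.floor_add_natCast]
  omega

lemma summable_one_sub_pow_mul_pow_kFun {p : ℝ} (hp0 : 0 < p) (hp1 : p ≤ 1) (a : ℝ) :
    Summable fun i => (1 - p) ^ i * p ^ kFun a i := by
  refine .of_nonneg_of_le (fun i => by have := sub_nonneg.2 hp1; positivity) (fun i => ?_)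
    (summable_geometric_of_lt_one (sub_nonneg.2 hp1) (by linarith))
  exact mul_le_of_le_one_right (pow_nonneg (sub_nonneg.2 hp1) i) (pow_le_one₀ hp0.le hp1)

open Finset in
lemma sum_range_one_sub_pow_mul_pow_kFun_le_one {p a : ℝ} (hp0 : 0 ≤ p) (hp1 : p ≤ 1)
    (ha : 0 ≤ a) (n : ℕ) : ∑ i ∈ range n, (1 - p) ^ i * p ^ kFun a i ≤ 1 := by
  have hp1' : 0 ≤ 1 - p := sub_nonneg.2 hp1
  calc ∑ i ∈ range n, (1 - p) ^ i * p ^ kFun a i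
      ≤ ∑ i ∈ range n, (1 - p) ^ i * p := by
        gcongr with i
        exact pow_le_of_le_one hp0 hp1 (Nat.one_le_iff_ne_zero.1 (one_le_kFun ha i))
    _ = 1 - (1 - p) ^ n := by
        have := geom_sum_mul (1 - p) n
        rw [← sum_mul]
        linarith
    _ ≤ 1 := sub_le_self _ (pow_nonneg hp1' n)

lemma pirra_eq_sum_range_div {p : ℝ} (hp0 : 0 < p) (hp1 : p < 1) {r q : ℕ} (hr : 0 < r)
    (hq : 0 < q) :
    Pirra p (r / q) = (∑ i ∈ Finset.range r, (1 - p) ^ i * p ^ kFun (r / q) i) /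
      (1 - p ^ q * (1 - p) ^ r) := by
  refine tsum_eq_sum_range_div_of_add_eq_mul
    (summable_one_sub_pow_mul_pow_kFun hp0 hp1.le _) (ne_of_lt ?_) fun i => ?_
  · exact mul_lt_one_of_nonneg_of_lt_one_left (by positivity) (pow_lt_one₀ hp0.le hp1 hq.ne')
      (pow_le_one₀ (by linarith) (by linarith))
  · rw [kFun_add hr hq, pow_add, pow_add]
    ring

lemma pow_mul_one_sub_pow_le {p : ℝ} (hp : 1 / 2 ≤ p) (hp1 : p ≤ 1) {q r : ℕ} (hq : 0 < q)
    (hr : 0 < r) : p ^ q * (1 - p) ^ r ≤ (1 / 2) ^ (r + 1) := by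
  obtain ⟨s, rfl⟩ := Nat.exists_eq_add_of_lt hr
  have h0 : 0 ≤ 1 - p := sub_nonneg.2 hp1
  have hvertex : p * (1 - p) ≤ 1 / 4 := by nlinarith [sq_nonneg (p - 1 / 2)]
  calc p ^ q * (1 - p) ^ (0 + s + 1) ≤ p * (1 - p) ^ (0 + s + 1) := by
        gcongr
        exact pow_le_of_le_one (by linarith) hp1 hq.ne'
    _ = p * (1 - p) * (1 - p) ^ s := by ring
    _ ≤ 1 / 4 * (1 / 2) ^ s := by
        gcongr
        linarith
    _ = (1 / 2) ^ (0 + s + 1 + 1) := by ring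

lemma abs_div_sub_div_le {S x : ℝ} (hS0 : 0 ≤ S) (hS1 : S ≤ 1) (hx0 : 0 ≤ x)
    (hx : x ≤ 1 / 8) :
    |S / (1 - 2 * x) - S / (1 - x)| ≤ 2 * x := by
  have h1 : 0 < 1 - 2 * x := by linarith
  have h2 : 0 < 1 - x := by linarith
  rw [div_sub_div _ _ h1.ne' h2.ne', abs_of_nonneg (div_nonneg (by nlinarith) (by positivity)),
    div_le_iff₀ (by positivity)]
  nlinarith [mul_nonneg hx0 (sub_nonneg.2 hS1), mul_nonneg (mul_nonneg hx0 hx0) hx0]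

lemma half_pow_lt_of_logb_lt {ε : ℝ} (hε : 0 < ε) {n : ℕ} (h : Real.logb 2 (1 / ε) < n) :
    (1 / 2 : ℝ) ^ n < ε := by
  rw [Real.logb_lt_iff_lt_rpow (by norm_num) (by positivity), Real.rpow_natCast,
    one_div_lt hε (by positivity)] at h
  simpa [one_div_pow] using h

theorem abs_pra_sub_pirra_lt {ε p : ℝ} (hε : 0 < ε) (hp : 1 / 2 < p) (hp1 : p < 1) {r q : ℕ}
    (hq : 0 < q) (hqr : q < r) (hlog : Real.logb 2 (1 / ε) < r) :
    |Pra p r q - Pirra p (r / q)| < ε := by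
  set x := p ^ q * (1 - p) ^ r
  have hx0 : 0 ≤ x := mul_nonneg (pow_nonneg (by linarith) q) (pow_nonneg (by linarith) r)
  have hx : x ≤ (1 / 2) ^ (r + 1) := pow_mul_one_sub_pow_le hp.le hp1.le hq (hq.trans hqr)
  have hx8 : x ≤ 1 / 8 := hx.trans <| by
    calc (1 / 2 : ℝ) ^ (r + 1) ≤ (1 / 2) ^ 3 :=
          pow_le_pow_of_le_one (by norm_num) (by norm_num) (by omega)
      _ = 1 / 8 := by norm_num
  rw [Pra, pirra_eq_sum_range_div (by linarith) hp1 (hq.trans hqr) hq, mul_assoc]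
  calc _ ≤ 2 * x := abs_div_sub_div_le (Finset.sum_nonneg fun i _ => by
          have := sub_nonneg.2 hp1.le; positivity)
        (sum_range_one_sub_pow_mul_pow_kFun_le_one (by linarith) hp1.le (by positivity) r) hx0 hx8
    _ ≤ 2 * (1 / 2) ^ (r + 1) := by gcongr
    _ = (1 / 2) ^ r := by ring
    _ < ε := half_pow_lt_of_logb_lt hε hlog

lemma Rat.den_lt_num_of_one_lt {x : ℚ} (hx : 1 < x) : (x.den : ℤ) < x.num := by
  rw [← x.num_div_den, one_lt_div (by exact_mod_cast x.pos)] at hx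
  exact_mod_cast hx

lemma Rat.mapsTo_num_den_Icc (n : ℕ) :
    Set.MapsTo (fun x : ℚ => (x.num, x.den)) {x | 1 < x ∧ x.num ≤ n}
      (Finset.Icc (1 : ℤ) n ×ˢ Finset.Icc 1 n : Finset (ℤ × ℕ)) := by
  rintro x ⟨hx, hn⟩
  have := Rat.den_lt_num_of_one_lt hx
  have := x.pos
  simp only [Finset.coe_product, Set.mem_prod, Finset.coe_Icc, Set.mem_Icc]
  omega

lemma Rat.injective_num_den : Function.Injective fun x : ℚ => (x.num, x.den) :=
  fun _ _ h => Rat.ext (congrArg Prod.fst h) (congrArg Prod.snd h)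

lemma Rat.finite_setOf_one_lt_num_le (n : ℕ) : {x : ℚ | 1 < x ∧ x.num ≤ n}.Finite :=
  .of_injOn (Rat.mapsTo_num_den_Icc n) Rat.injective_num_den.injOn (Finset.finite_toSet _)

lemma Rat.ncard_setOf_one_lt_num_le (n : ℕ) :
    {x : ℚ | 1 < x ∧ x.num ≤ n}.ncard ≤ n ^ 2 := by
  calc _ ≤ (Finset.Icc (1 : ℤ) n ×ˢ Finset.Icc 1 n : Finset (ℤ × ℕ)).card := by
        rw [← Set.ncard_coe_finset]
        exact Set.ncard_le_ncard_of_injOn _ (Rat.mapsTo_num_den_Icc n)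
          Rat.injective_num_den.injOn (Finset.finite_toSet _)
    _ = n ^ 2 := by simp [sq]

lemma Nat.cast_floor_sq_le_sq (L : ℝ) : ((⌊L⌋₊ : ℕ) : ℝ) ^ 2 ≤ L ^ 2 := by
  rcases le_total 0 L with hL | hL
  · exact pow_le_pow_left₀ (by positivity) (Nat.floor_le hL) 2
  · simp [Nat.floor_of_nonpos hL, sq_nonneg]

lemma num_le_of_le_abs_pra_sub_pirra {ε p : ℝ} (hε : 0 < ε) (hp : 1 / 2 < p) (hp1 : p < 1)
    {x : ℚ} (hx : 1 < x) (hexc : ε ≤ |Pra p x.num.toNat x.den - Pirra p x|) :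
    x.num ≤ ⌊Real.logb 2 (1 / ε) + 1⌋₊ := by
  have hden := Rat.den_lt_num_of_one_lt hx
  have hcast : (x : ℝ) = (x.num.toNat : ℝ) / x.den := by
    have hnum : ((x.num.toNat : ℕ) : ℝ) = x.num := by
      exact_mod_cast Int.toNat_of_nonneg (by omega)
    rw [Rat.cast_def, hnum]
  rw [← Int.toNat_le, Nat.le_floor_iff' (by omega)]
  by_contra! hlog
  rw [hcast] at hexc
  exact (abs_pra_sub_pirra_lt hε hp hp1 x.pos (by omega) (by linarith)).not_ge hexc

theorem rational_formula_close_and_finitely_many_exceptions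
    (ε : ℝ) (hε : 0 < ε) (p1 : ℝ) (h1 : 1/2 < p1) (h1' : p1 < 1) :
    (∀ r q : ℕ, 0 < q → q < r → Nat.Coprime r q →
        Real.logb 2 (1 / ε) + 1 < (r : ℝ) →
        |Pra p1 r q - Pirra p1 ((r : ℝ) / (q : ℝ))| < ε) ∧
      {x : ℚ | 1 < x ∧ ε ≤ |Pra p1 x.num.toNat x.den - Pirra p1 (x : ℝ)|}.Finite ∧
      ({x : ℚ | 1 < x ∧ ε ≤ |Pra p1 x.num.toNat x.den - Pirra p1 (x : ℝ)|}.ncard : ℝ)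
        ≤ (Real.logb 2 (1 / ε) + 1) ^ 2 := by
  set N := ⌊Real.logb 2 (1 / ε) + 1⌋₊
  have hsub : {x : ℚ | 1 < x ∧ ε ≤ |Pra p1 x.num.toNat x.den - Pirra p1 (x : ℝ)|} ⊆
      {x : ℚ | 1 < x ∧ x.num ≤ N} := fun x ⟨hx, hexc⟩ =>
    ⟨hx, num_le_of_le_abs_pra_sub_pirra hε h1 h1' hx hexc⟩
  refine ⟨fun r q hq hqr _ hlog => abs_pra_sub_pirra_lt hε h1 h1' hq hqr (by linarith),
    (Rat.finite_setOf_one_lt_num_le N).subset hsub, ?_⟩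
  calc _ ≤ ((N ^ 2 : ℕ) : ℝ) := by
        exact_mod_cast (Set.ncard_le_ncard hsub (Rat.finite_setOf_one_lt_num_le N)).trans
          (Rat.ncard_setOf_one_lt_num_le N)
    _ ≤ _ := by exact_mod_cast Nat.cast_floor_sq_le_sq _
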